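/- One-step descent inequality with smoothing correction: Let X, Z be finite-dimensional real inner product spaces, φ ∈ Γ₀(X), h : X → ℝ differentiable, S : X → Z continuously differentiable, g : Z → ℝ Lipschitz with constant L_g > 0 and η-weakly convex, c ∈ (0,1), and M ≥ 1. Let 0 < μ_{n+1} ≤ μ_n < η⁻¹ with μ_n/μ_{n+1} ≤ M, set F_n := h + g_{μ_n}∘S and F_{n+1} := h + g_{μ_{n+1}}∘S. Suppose x_n ∈ dom φ and γ_n > 0 satisfies the Armijo-type condition (F_n + φ)(x_{n+1}) ≤ (F_n + φ)(x_n) − cγ_n‖(x_n − x_{n+1})/γ_n‖² where x_{n+1} := prox_{γ_nφ}(x_n − γ_n∇F_n(x_n)). Then (F_{n+1} + φ)(x_{n+1}) ≤ (F_n + φ)(x_n) − cγ_n‖(x_n − x_{n+1})/γ_n‖² + (M/2)(μ_n − μ_{n+1})L_g². -/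

import Mathlib

open Filter Topology Pointwise

noncomputable section

/-- The Fréchet (regular) subdifferential of an extended-real-valued function `J` at `x'`:
`v ∈ ∂_F J(x')` iff `x' ∈ dom J` and
`liminf_{x → x', x ≠ x'} (J x − J x' − ⟨v, x − x'⟩)/‖x − x'‖ ≥ 0`. -/
def frechetSubdiff {X : Type*} [NormedAddCommGroup X] [InnerProductSpace ℝ X]
    (J : X → EReal) (x' : X) : Set X :=
  {v | J x' ≠ ⊤ ∧
    (0 : EReal) ≤ Filter.liminf
      (fun x => (J x - J x' - ((inner ℝ v (x - x') : ℝ) : EReal)) * ((‖x - x'‖⁻¹ : ℝ) : EReal))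
      (𝓝[≠] x')}

/-- The limiting (general) subdifferential of `J` at `x'`. -/
def limitingSubdiff {X : Type*} [NormedAddCommGroup X] [InnerProductSpace ℝ X]
    (J : X → EReal) (x' : X) : Set X :=
  {v | ∃ xs vs : ℕ → X,
      Tendsto xs atTop (𝓝 x') ∧
      Tendsto (fun n => J (xs n)) atTop (𝓝 (J x')) ∧
      (∀ n, vs n ∈ frechetSubdiff J (xs n)) ∧
      Tendsto vs atTop (𝓝 v)}

/-- The convex subdifferential of `φ` at `x'`. -/
def convexSubdiff {X : Type*} [NormedAddCommGroup X] [InnerProductSpace ℝ X]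
    (φ : X → EReal) (x' : X) : Set X :=
  {v | ∀ x, φ x' + ((inner ℝ v (x - x') : ℝ) : EReal) ≤ φ x}

/-- `φ ∈ Γ₀(X)`: proper, lower semicontinuous, convex, with values in `ℝ ∪ {+∞}`. -/
structure Gamma0 {X : Type*} [NormedAddCommGroup X] [InnerProductSpace ℝ X]
    (φ : X → EReal) : Prop where
  ne_bot : ∀ x, φ x ≠ ⊥
  proper : ∃ x, φ x ≠ ⊤
  lsc : LowerSemicontinuous φ
  cvx : ∀ x y : X, ∀ t : ℝ, 0 ≤ t → t ≤ 1 →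
    φ (t • x + (1 - t) • y) ≤ (t : EReal) * φ x + ((1 - t : ℝ) : EReal) * φ y

/-- `p` is the unique minimizer of `x ↦ φ x + ‖x - y‖² / (2γ)`, i.e. `p = prox_{γφ}(y)`. -/
def IsProxPt {X : Type*} [NormedAddCommGroup X] [InnerProductSpace ℝ X]
    (φ : X → EReal) (γ : ℝ) (y p : X) : Prop :=
  (∀ x : X, φ p + ((‖p - y‖ ^ 2 / (2 * γ) : ℝ) : EReal) ≤
      φ x + ((‖x - y‖ ^ 2 / (2 * γ) : ℝ) : EReal)) ∧
  ∀ q : X, (∀ x : X, φ q + ((‖q - y‖ ^ 2 / (2 * γ) : ℝ) : EReal) ≤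
      φ x + ((‖x - y‖ ^ 2 / (2 * γ) : ℝ) : EReal)) → q = p

/-- Moreau envelope of `g` of index `μ`. -/
def moreauEnv {Z : Type*} [NormedAddCommGroup Z] [InnerProductSpace ℝ Z]
    (g : Z → ℝ) (μ : ℝ) (z' : Z) : ℝ :=
  ⨅ z : Z, (g z + ‖z - z'‖ ^ 2 / (2 * μ))

/-- Gradient mapping-type stationarity measure
`M_γ^{F,φ}(x') = inf { ‖(x' − prox_{γφ}(x' − γ v))/γ‖ : v ∈ ∂_L F(x') }`. -/
def statM {X : Type*} [NormedAddCommGroup X] [InnerProductSpace ℝ X]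
    (F : X → ℝ) (prox : ℝ → X → X) (γ : ℝ) (x' : X) : ℝ :=
  sInf ((fun v => ‖γ⁻¹ • (x' - prox γ (x' - γ • v))‖) ''
    limitingSubdiff (fun x => ((F x : ℝ) : EReal)) x')

/-- Outer limit (Painlevé–Kuratowski upper limit) of a sequence of sets. -/
def outerLimit {X : Type*} [NormedAddCommGroup X] (E : ℕ → Set X) : Set X :=
  {v | ∃ k : ℕ → ℕ, StrictMono k ∧ ∃ vs : ℕ → X, (∀ l, vs l ∈ E (k l)) ∧
      Tendsto vs atTop (𝓝 v)}

/-- Armijo-type condition for the proximal gradient step with smooth part `J`,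
nonsmooth part `φ`, parameter `c` and stepsize `γ` at the point `x'`. -/
def ArmijoCond {X : Type*} [NormedAddCommGroup X] [InnerProductSpace ℝ X] [CompleteSpace X]
    (φ : X → EReal) (prox : ℝ → X → X) (J : X → ℝ) (c γ : ℝ) (x' : X) : Prop :=
  ((J (prox γ (x' - γ • gradient J x')) : ℝ) : EReal) + φ (prox γ (x' - γ • gradient J x')) ≤
    ((J x' : ℝ) : EReal) + φ x' -
      ((c * γ * ‖γ⁻¹ • (x' - prox γ (x' - γ • gradient J x'))‖ ^ 2 : ℝ) : EReal)

lemma moreau_bddBelow {Z : Type*} [NormedAddCommGroup Z] [InnerProductSpace ℝ Z]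
    (g : Z → ℝ) (Lg : ℝ) (hLg : 0 < Lg)
    (hgLip : ∀ z₁ z₂ : Z, |g z₁ - g z₂| ≤ Lg * ‖z₁ - z₂‖)
    (ν : ℝ) (hν : 0 < ν) (z : Z) :
    BddBelow (Set.range fun w => g w + ‖w - z‖ ^ 2 / (2 * ν)) := by
  refine ⟨g z - ν * Lg ^ 2 / 2, ?_⟩
  rintro y ⟨w, rfl⟩
  have h1 := hgLip z w
  have h2 : Lg * ‖z - w‖ - ν * Lg ^ 2 / 2 ≤ ‖w - z‖ ^ 2 / (2 * ν) := by
    rw [le_div_iff₀ (by positivity), norm_sub_rev z w]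
    nlinarith [sq_nonneg (‖w - z‖ - ν * Lg)]
  linarith [(abs_le.mp h1).2]

lemma moreau_compare {Z : Type*} [NormedAddCommGroup Z] [InnerProductSpace ℝ Z]
    [FiniteDimensional ℝ Z]
    (g : Z → ℝ) (Lg : ℝ) (hLg : 0 < Lg)
    (hgLip : ∀ z₁ z₂ : Z, |g z₁ - g z₂| ≤ Lg * ‖z₁ - z₂‖)
    (μ μ' : ℝ) (hμ' : 0 < μ') (hle : μ' ≤ μ) (z : Z) :
    moreauEnv g μ' z ≤ moreauEnv g μ z + μ / μ' * (μ - μ') * Lg ^ 2 / 2 := by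
  have hμ : 0 < μ := lt_of_lt_of_le hμ' hle
  set f : Z → ℝ := fun w => g w + ‖w - z‖ ^ 2 / (2 * μ) with hf
  have hgc : Continuous g := by
    have : LipschitzWith ⟨Lg, hLg.le⟩ g := by
      apply LipschitzWith.of_dist_le_mul
      intro x y
      rw [Real.dist_eq, dist_eq_norm]
      exact hgLip x y
    exact this.continuous
  have hfc : Continuous f := by
    apply hgc.add
    fun_prop
  -- minimize on a compact ball
  have hBc : IsCompact (Metric.closedBall z (2 * μ * Lg)) := isCompact_closedBall z _
  have hzB : z ∈ Metric.closedBall z (2 * μ * Lg) :=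
    Metric.mem_closedBall_self (by positivity)
  obtain ⟨p, hpB, hpmin⟩ := hBc.exists_isMinOn ⟨z, hzB⟩ hfc.continuousOn
  have hglob : ∀ w, f p ≤ f w := by
    intro w
    by_cases hw : w ∈ Metric.closedBall z (2 * μ * Lg)
    · exact hpmin hw
    · have hs : 2 * μ * Lg < ‖w - z‖ := by
        simpa [Metric.mem_closedBall, dist_eq_norm, not_le] using hw
      have h1 : f p ≤ f z := hpmin hzB
      have h2 : f z = g z := by simp [hf]
      have h3 : g z - Lg * ‖w - z‖ ≤ g w := by
        have := (abs_le.mp (hgLip z w)).2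
        rw [norm_sub_rev z w] at this
        linarith
      have h4 : Lg * ‖w - z‖ ≤ ‖w - z‖ ^ 2 / (2 * μ) := by
        rw [le_div_iff₀ (by positivity)]
        nlinarith [norm_nonneg (w - z)]
      have : g z ≤ f w := by simp only [hf]; linarith
      linarith [h1, h2.le]
  set s : ℝ := ‖p - z‖ with hs
  have hs0 : 0 ≤ s := norm_nonneg _
  have key : ∀ t : ℝ, 0 < t → t ≤ 1 → (2 - t) * s ^ 2 ≤ 2 * μ * Lg * s := by
    intro t ht0 ht1
    have hq := hglob (p + t • (z - p))
    have h1 : ‖p + t • (z - p) - z‖ = (1 - t) * s := by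
      have he : p + t • (z - p) - z = (1 - t) • (p - z) := by module
      rw [he, norm_smul, Real.norm_eq_abs, abs_of_nonneg (by linarith)]
    have hn : ‖p + t • (z - p) - p‖ = t * s := by
      have he : p + t • (z - p) - p = t • (z - p) := by module
      rw [he, norm_smul, Real.norm_eq_abs, abs_of_nonneg ht0.le, norm_sub_rev]
    have h2 : g (p + t • (z - p)) ≤ g p + Lg * (t * s) := by
      have := (abs_le.mp (hgLip (p + t • (z - p)) p)).2
      rw [hn] at this
      linarith
    have h3 : g p + s ^ 2 / (2 * μ) ≤ g p + Lg * (t * s) + ((1 - t) * s) ^ 2 / (2 * μ) := by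
      have := hq
      simp only [hf] at this
      rw [h1] at this
      linarith
    have h4 : s ^ 2 / (2 * μ) - ((1 - t) * s) ^ 2 / (2 * μ) ≤ Lg * (t * s) := by linarith
    rw [div_sub_div_same, div_le_iff₀ (by positivity)] at h4
    have h5 : t * ((2 - t) * s ^ 2) ≤ t * (2 * μ * Lg * s) := by nlinarith [h4]
    exact le_of_mul_le_mul_left h5 ht0
  have hsle : s ≤ μ * Lg := by
    rcases eq_or_lt_of_le hs0 with h0 | h0
    · rw [← h0]; positivity
    · have h2s : 2 * s ^ 2 ≤ 2 * μ * Lg * s := by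
        refine le_of_forall_pos_le_add fun ε hε => ?_
        have hsq : 0 < s ^ 2 := by positivity
        set t : ℝ := min 1 (ε / s ^ 2) with ht
        have ht0 : 0 < t := lt_min one_pos (by positivity)
        have ht1 : t ≤ 1 := min_le_left _ _
        have hk := key t ht0 ht1
        have hts : t * s ^ 2 ≤ ε := by
          have : t ≤ ε / s ^ 2 := min_le_right _ _
          calc t * s ^ 2 ≤ ε / s ^ 2 * s ^ 2 := by nlinarith
            _ = ε := by field_simp
        nlinarith
      nlinarith
  have hs2 : s ^ 2 ≤ (μ * Lg) ^ 2 := by nlinarith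
  have h1 : moreauEnv g μ' z ≤ g p + s ^ 2 / (2 * μ') :=
    ciInf_le (moreau_bddBelow g Lg hLg hgLip μ' hμ' z) p
  have h2 : g p + s ^ 2 / (2 * μ) ≤ moreauEnv g μ z := le_ciInf hglob
  have hkey : s ^ 2 / (2 * μ') ≤ s ^ 2 / (2 * μ) + μ / μ' * (μ - μ') * Lg ^ 2 / 2 := by
    have e2 : 0 ≤ μ - μ' := by linarith
    have hnum : s ^ 2 * (μ - μ') ≤ μ ^ 2 * Lg ^ 2 * (μ - μ') := by nlinarith
    have hid1 : s ^ 2 / (2 * μ') - s ^ 2 / (2 * μ) = s ^ 2 * (μ - μ') / (2 * μ * μ') := by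
      field_simp
    have hid2 : μ / μ' * (μ - μ') * Lg ^ 2 / 2 = μ ^ 2 * Lg ^ 2 * (μ - μ') / (2 * μ * μ') := by
      field_simp
    have hq : s ^ 2 * (μ - μ') / (2 * μ * μ') ≤ μ ^ 2 * Lg ^ 2 * (μ - μ') / (2 * μ * μ') := by
      apply div_le_div_of_nonneg_right hnum (by positivity)
    linarith
  linarith

/-- One-step descent inequality with smoothing correction:
`(F_{n+1} + φ)(x_{n+1}) ≤ (F_n + φ)(x_n) − cγ_n‖(x_n − x_{n+1})/γ_n‖² + (M/2)(μ_n − μ_{n+1})L_g²`. -/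
theorem one_step_descent_with_smoothing
    {X : Type*} [NormedAddCommGroup X] [InnerProductSpace ℝ X] [FiniteDimensional ℝ X]
    {Z : Type*} [NormedAddCommGroup Z] [InnerProductSpace ℝ Z] [FiniteDimensional ℝ Z]
    (φ : X → EReal) (hφ : Gamma0 φ)
    (prox : ℝ → X → X) (hprox : ∀ γ : ℝ, 0 < γ → ∀ y : X, IsProxPt φ γ y (prox γ y))
    (h : X → ℝ) (hdiff : Differentiable ℝ h)
    (S : X → Z) (hS : ContDiff ℝ 1 S)
    (g : Z → ℝ) (Lg : ℝ) (hLg : 0 < Lg)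
    (hgLip : ∀ z₁ z₂ : Z, |g z₁ - g z₂| ≤ Lg * ‖z₁ - z₂‖)
    (η : ℝ) (hη : 0 < η)
    (hwc : ConvexOn ℝ Set.univ fun z : Z => g z + η / 2 * ‖z‖ ^ 2)
    (c : ℝ) (hc0 : 0 < c) (hc1 : c < 1) (M : ℝ) (hM : 1 ≤ M)
    (μn μn1 : ℝ) (hμn1 : 0 < μn1) (hμle : μn1 ≤ μn) (hμn : μn < η⁻¹)
    (hratio : μn / μn1 ≤ M)
    (Fn Fn1 : X → ℝ)
    (hFnd : Fn = fun y => h y + moreauEnv g μn (S y))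
    (hFn1d : Fn1 = fun y => h y + moreauEnv g μn1 (S y))
    (xn : X) (hxn : φ xn ≠ ⊤) (γn : ℝ) (hγn : 0 < γn)
    (xnext : X) (hxnext : xnext = prox γn (xn - γn • gradient Fn xn))
    (hArmijo : ArmijoCond φ prox Fn c γn xn) :
    ((Fn1 xnext : ℝ) : EReal) + φ xnext ≤
      ((Fn xn : ℝ) : EReal) + φ xn
        - ((c * γn * ‖γn⁻¹ • (xn - xnext)‖ ^ 2 : ℝ) : EReal)
        + ((M / 2 * (μn - μn1) * Lg ^ 2 : ℝ) : EReal) := by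
  -- envelope comparison
  have henv : Fn1 xnext ≤ Fn xnext + M / 2 * (μn - μn1) * Lg ^ 2 := by
    have hcmp := moreau_compare g Lg hLg hgLip μn μn1 hμn1 hμle (S xnext)
    have hfac : μn / μn1 * (μn - μn1) * Lg ^ 2 / 2 ≤ M / 2 * (μn - μn1) * Lg ^ 2 := by
      have h1 : 0 ≤ (μn - μn1) * Lg ^ 2 := mul_nonneg (by linarith) (sq_nonneg _)
      nlinarith [hratio, h1]
    rw [hFnd, hFn1d]
    simp only
    linarith
  -- Armijo condition in terms of xnext
  unfold ArmijoCond at hArmijo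
  rw [← hxnext] at hArmijo
  -- φ xn is real
  obtain ⟨rn, hrn⟩ : ∃ rn : ℝ, φ xn = (rn : EReal) :=
    ⟨(φ xn).toReal, (EReal.coe_toReal hxn (hφ.ne_bot xn)).symm⟩
  -- φ xnext is not ⊤
  have hnt : φ xnext ≠ ⊤ := by
    intro htop
    rw [htop, hrn] at hArmijo
    have hL : ((Fn xnext : ℝ) : EReal) + ⊤ = ⊤ := by
      simp
    rw [hL] at hArmijo
    have : ((Fn xn : ℝ) : EReal) + (rn : EReal)
        - ((c * γn * ‖γn⁻¹ • (xn - xnext)‖ ^ 2 : ℝ) : EReal)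
        = ((Fn xn + rn - c * γn * ‖γn⁻¹ • (xn - xnext)‖ ^ 2 : ℝ) : EReal) := by
      push_cast
      rfl
    rw [this, top_le_iff] at hArmijo
    exact EReal.coe_ne_top _ hArmijo
  obtain ⟨r, hr⟩ : ∃ r : ℝ, φ xnext = (r : EReal) :=
    ⟨(φ xnext).toReal, (EReal.coe_toReal hnt (hφ.ne_bot xnext)).symm⟩
  rw [hr, hrn] at hArmijo ⊢
  have hA : Fn xnext + r ≤ Fn xn + rn - c * γn * ‖γn⁻¹ • (xn - xnext)‖ ^ 2 := by
    have := hArmijo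
    rw [show ((Fn xn : ℝ) : EReal) + (rn : EReal)
        - ((c * γn * ‖γn⁻¹ • (xn - xnext)‖ ^ 2 : ℝ) : EReal)
        = ((Fn xn + rn - c * γn * ‖γn⁻¹ • (xn - xnext)‖ ^ 2 : ℝ) : EReal) by push_cast; rfl,
      show ((Fn xnext : ℝ) : EReal) + (r : EReal) = ((Fn xnext + r : ℝ) : EReal) by push_cast; rfl]
      at this
    exact_mod_cast this
  rw [show ((Fn xn : ℝ) : EReal) + (rn : EReal)
      - ((c * γn * ‖γn⁻¹ • (xn - xnext)‖ ^ 2 : ℝ) : EReal)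
      + ((M / 2 * (μn - μn1) * Lg ^ 2 : ℝ) : EReal)
      = ((Fn xn + rn - c * γn * ‖γn⁻¹ • (xn - xnext)‖ ^ 2
          + M / 2 * (μn - μn1) * Lg ^ 2 : ℝ) : EReal) by push_cast; rfl,
    show ((Fn1 xnext : ℝ) : EReal) + (r : EReal) = ((Fn1 xnext + r : ℝ) : EReal)
      by push_cast; rfl]
  exact_mod_cast (by linarith : Fn1 xnext + r ≤ Fn xn + rn
    - c * γn * ‖γn⁻¹ • (xn - xnext)‖ ^ 2 + M / 2 * (μn - μn1) * Lg ^ 2)
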